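/- (Spider nest identity.) For every n ≥ 4, the T-phase n-gadget decomposes into phase gadgets on at most three qubits, up to global phase: with σ_n = (n−2)(n−3)π/8 and θ_n = −(n−3)π/4, there exists ω : ℂ with |ω| = 1 such that exp(−(π i/8) • Z_{Finset.univ}) = ω • ( ∏_{j : Fin n} exp(−(i σ_n/2) • Z_{{j}}) ) · ( ∏_{S : Finset (Fin n), |S| = 2} exp(−(i θ_n/2) • Z_S) ) · ( ∏_{S : Finset (Fin n), |S| = 3} exp(−(π i/8) • Z_S) ); here a phase gadget with angle α on S is the matrix exp(−(iα/2) • Z_S), and all factors are diagonal, hence commute. -/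

import Mathlib

noncomputable section

/-- The parity operator `Z_S`: the diagonal matrix whose `(z,z)` entry is
`(-1) ^ (∑ j ∈ S, z j)`. -/
def Zgad (n : ℕ) (S : Finset (Fin n)) : Matrix (Fin n → Fin 2) (Fin n → Fin 2) ℂ :=
  Matrix.diagonal fun z => (-1 : ℂ) ^ (∑ j ∈ S, (z j : ℕ))

/-- Exponentials of scalar multiples of parity operators commute (they are all diagonal). -/
theorem zcomm (n : ℕ) (c d : ℂ) (S T : Finset (Fin n)) :
    Commute (NormedSpace.exp (c • Zgad n S)) (NormedSpace.exp (d • Zgad n T)) := by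
  apply Commute.exp
  unfold Zgad
  rw [Commute, SemiconjBy, Matrix.smul_mul, Matrix.mul_smul, Matrix.diagonal_mul_diagonal,
    Matrix.smul_mul, Matrix.mul_smul, Matrix.diagonal_mul_diagonal, smul_comm]
  have hfg : (fun i : Fin n → Fin 2 =>
      ((-1 : ℂ) ^ (∑ j ∈ S, (i j : ℕ))) * ((-1 : ℂ) ^ (∑ j ∈ T, (i j : ℕ)))) =
      (fun i : Fin n → Fin 2 =>
      ((-1 : ℂ) ^ (∑ j ∈ T, (i j : ℕ))) * ((-1 : ℂ) ^ (∑ j ∈ S, (i j : ℕ)))) :=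
    funext fun i => mul_comm _ _
  rw [hfg]

/-- The phase gadget with angle `α` on the set `S`: `exp(-(i α/2) • Z_S)`. -/
def PhaseGadget (n : ℕ) (α : ℝ) (S : Finset (Fin n)) :
    Matrix (Fin n → Fin 2) (Fin n → Fin 2) ℂ :=
  NormedSpace.exp ((-(Complex.I * (α : ℂ) / 2)) • Zgad n S)

theorem pgComm (n : ℕ) (α β : ℝ) (S T : Finset (Fin n)) :
    Commute (PhaseGadget n α S) (PhaseGadget n β T) := by
  unfold PhaseGadget
  exact zcomm n _ _ S T

/-! ### Auxiliary results -/

lemma exp_smul_Zgad (n : ℕ) (c : ℂ) (S : Finset (Fin n)) :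
    NormedSpace.exp (c • Zgad n S) =
      Matrix.diagonal (fun z => Complex.exp (c * (-1 : ℂ) ^ (∑ j ∈ S, (z j : ℕ)))) := by
  unfold Zgad
  rw [← Matrix.diagonal_smul, Matrix.exp_diagonal]
  funext z
  rw [Pi.exp_def]
  simp [← Complex.exp_eq_exp_ℂ, smul_eq_mul]

lemma pg_diag (n : ℕ) (α : ℝ) (S : Finset (Fin n)) :
    PhaseGadget n α S = Matrix.diagonal (fun z =>
      Complex.exp ((-(Complex.I * (α : ℂ) / 2)) * (-1 : ℂ) ^ (∑ j ∈ S, (z j : ℕ)))) :=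
  exp_smul_Zgad n _ S

lemma noncommProd_diag {n : ℕ} {ι : Type*} (s : Finset ι)
    (F : ι → Matrix (Fin n → Fin 2) (Fin n → Fin 2) ℂ)
    (f : ι → ((Fin n → Fin 2) → ℂ))
    (hF : ∀ i ∈ s, F i = Matrix.diagonal (f i)) (comm) :
    s.noncommProd F comm = Matrix.diagonal (fun z => ∏ i ∈ s, f i z) := by
  rw [Finset.noncommProd_congr rfl hF comm]
  have h' : (↑s : Set ι).Pairwise fun a b => Commute (f a) (f b) :=
    fun a _ b _ _ => Commute.all _ _
  have hmap := Finset.map_noncommProd s f h' (Matrix.diagonalRingHom (Fin n → Fin 2) ℂ)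
  rw [Finset.noncommProd_eq_prod] at hmap
  have hd : (Matrix.diagonalRingHom (Fin n → Fin 2) ℂ) (∏ i ∈ s, f i)
      = Matrix.diagonal (fun z => ∏ i ∈ s, f i z) :=
    congrArg Matrix.diagonal (funext fun z => Finset.prod_apply z s f)
  rw [hd] at hmap
  exact hmap.symm

lemma esymm_one {ι : Type*} [DecidableEq ι] (s : Finset ι) (y : ι → ℤ) :
    ∑ S ∈ Finset.powersetCard 1 s, ∏ j ∈ S, y j = ∑ i ∈ s, y i := by
  rw [Finset.powersetCard_one, Finset.sum_map]
  simp

lemma esymm_insert {ι : Type*} [DecidableEq ι] {a : ι} {s : Finset ι} (ha : a ∉ s)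
    (y : ι → ℤ) (r : ℕ) :
    ∑ S ∈ Finset.powersetCard (r+1) (insert a s), ∏ j ∈ S, y j =
      (∑ S ∈ Finset.powersetCard (r+1) s, ∏ j ∈ S, y j)
        + y a * ∑ S ∈ Finset.powersetCard r s, ∏ j ∈ S, y j := by
  rw [Finset.powersetCard_succ_insert ha]
  rw [Finset.sum_union]
  · congr 1
    rw [Finset.sum_image, Finset.mul_sum]
    · apply Finset.sum_congr rfl
      intro S hS
      rw [Finset.mem_powersetCard] at hS
      rw [Finset.prod_insert (fun hmem => ha (hS.1 hmem))]
    · intro S hS T hT hST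
      rw [Finset.mem_coe, Finset.mem_powersetCard] at hS hT
      have haS : a ∉ S := fun h => ha (hS.1 h)
      have haT : a ∉ T := fun h => ha (hT.1 h)
      rw [← Finset.erase_insert haS, ← Finset.erase_insert haT, hST]
  · rw [Finset.disjoint_left]
    intro S hS hS'
    rw [Finset.mem_powersetCard] at hS
    obtain ⟨T, hT, rfl⟩ := Finset.mem_image.mp hS'
    exact ha (hS.1 (Finset.mem_insert_self a T))

lemma esymm_two {ι : Type*} [DecidableEq ι] (s : Finset ι) (y : ι → ℤ)
    (hy : ∀ i ∈ s, y i * y i = 1) :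
    2 * ∑ S ∈ Finset.powersetCard 2 s, ∏ j ∈ S, y j
      = (∑ i ∈ s, y i) ^ 2 - s.card := by
  induction s using Finset.induction_on with
  | empty =>
    simp [Finset.powersetCard_eq_filter, Finset.filter_singleton]
  | @insert a s h ih =>
    rw [show (2:ℕ) = 1+1 from rfl, esymm_insert h y 1, esymm_one,
      Finset.sum_insert h, Finset.card_insert_of_notMem h]
    have ha : y a * y a = 1 := hy a (Finset.mem_insert_self a s)
    have ih' := ih (fun i hi => hy i (Finset.mem_insert_of_mem hi))
    push_cast
    linear_combination ih' - ha

lemma esymm_three {ι : Type*} [DecidableEq ι] (s : Finset ι) (y : ι → ℤ)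
    (hy : ∀ i ∈ s, y i * y i = 1) :
    6 * ∑ S ∈ Finset.powersetCard 3 s, ∏ j ∈ S, y j
      = (∑ i ∈ s, y i) ^ 3 - (3 * s.card - 2) * ∑ i ∈ s, y i := by
  induction s using Finset.induction_on with
  | empty =>
    simp [Finset.powersetCard_eq_filter, Finset.filter_singleton]
  | @insert a s h ih =>
    rw [show (3:ℕ) = 2+1 from rfl, esymm_insert h y 2,
      Finset.sum_insert h, Finset.card_insert_of_notMem h]
    have ha : y a * y a = 1 := hy a (Finset.mem_insert_self a s)
    have ih' := ih (fun i hi => hy i (Finset.mem_insert_of_mem hi))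
    have h2 := esymm_two s y (fun i hi => hy i (Finset.mem_insert_of_mem hi))
    push_cast
    linear_combination ih' + 3 * (y a) * h2 - (y a + 3 * (∑ i ∈ s, y i)) * ha

lemma key_dvd (n k : ℕ) :
    (32:ℤ) ∣ (-6 * (-1:ℤ)^k + 3*((n:ℤ)-2)*((n:ℤ)-3)*((n:ℤ)-2*(k:ℤ))
        - 3*((n:ℤ)-3)*(((n:ℤ)-2*(k:ℤ))^2 - (n:ℤ)) + (((n:ℤ)-2*(k:ℤ))^3 - (3*(n:ℤ)-2)*((n:ℤ)-2*(k:ℤ))))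
      - (-6 + 3*((n:ℤ)-2)*((n:ℤ)-3)*(n:ℤ)
        - 3*((n:ℤ)-3)*((n:ℤ)^2 - (n:ℤ)) + ((n:ℤ)^3 - (3*(n:ℤ)-2)*(n:ℤ))) := by
  have h32even : ∀ a b : ZMod 32,
      (-6 + 3*(a-2)*(a-3)*(a-2*(b+b)) - 3*(a-3)*((a-2*(b+b))^2 - a)
        + ((a-2*(b+b))^3 - (3*a-2)*(a-2*(b+b))))
      - (-6 + 3*(a-2)*(a-3)*a - 3*(a-3)*(a^2 - a) + (a^3 - (3*a-2)*a)) = 0 := by decide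
  have h32odd : ∀ a b : ZMod 32,
      (6 + 3*(a-2)*(a-3)*(a-2*(2*b+1)) - 3*(a-3)*((a-2*(2*b+1))^2 - a)
        + ((a-2*(2*b+1))^3 - (3*a-2)*(a-2*(2*b+1))))
      - (-6 + 3*(a-2)*(a-3)*a - 3*(a-3)*(a^2 - a) + (a^3 - (3*a-2)*a)) = 0 := by decide
  rcases Nat.even_or_odd k with ⟨l, hl⟩ | ⟨l, hl⟩
  · have hpow : (-1:ℤ)^k = 1 := Even.neg_one_pow ⟨l, hl⟩
    rw [hpow, hl, show (32:ℤ) = ((32:ℕ):ℤ) by norm_num, ← ZMod.intCast_zmod_eq_zero_iff_dvd]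
    push_cast
    have := h32even (n : ZMod 32) (l : ZMod 32)
    linear_combination this
  · have hpow : (-1:ℤ)^k = -1 := Odd.neg_one_pow ⟨l, hl⟩
    rw [hpow, hl, show (32:ℤ) = ((32:ℕ):ℤ) by norm_num, ← ZMod.intCast_zmod_eq_zero_iff_dvd]
    push_cast
    have := h32odd (n : ZMod 32) (l : ZMod 32)
    linear_combination this

/-- The combined integer exponent. -/
def Gint (n : ℕ) (z : Fin n → Fin 2) : ℤ :=
  ((n:ℤ)-2)*((n:ℤ)-3) * (∑ j : Fin n, (-1:ℤ)^((z j : ℕ)))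
  - 2*((n:ℤ)-3) * (∑ S ∈ Finset.univ.filter (fun S : Finset (Fin n) => S.card = 2),
      (-1:ℤ)^(∑ j ∈ S, (z j : ℕ)))
  + 2 * (∑ S ∈ Finset.univ.filter (fun S : Finset (Fin n) => S.card = 3),
      (-1:ℤ)^(∑ j ∈ S, (z j : ℕ)))
  - 2 * (-1:ℤ)^(∑ j : Fin n, (z j : ℕ))

lemma Gint_formula (n : ℕ) (z : Fin n → Fin 2) :
    3 * Gint n z =
      -6 * (-1:ℤ)^(∑ j : Fin n, (z j : ℕ))
      + 3*((n:ℤ)-2)*((n:ℤ)-3)*((n:ℤ)-2*((∑ j : Fin n, (z j : ℕ) : ℕ):ℤ))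
      - 3*((n:ℤ)-3)*(((n:ℤ)-2*((∑ j : Fin n, (z j : ℕ) : ℕ):ℤ))^2 - (n:ℤ))
      + (((n:ℤ)-2*((∑ j : Fin n, (z j : ℕ) : ℕ):ℤ))^3
          - (3*(n:ℤ)-2)*((n:ℤ)-2*((∑ j : Fin n, (z j : ℕ) : ℕ):ℤ))) := by
  classical
  have hyy : ∀ i ∈ (Finset.univ : Finset (Fin n)),
      (-1:ℤ)^((z i : ℕ)) * (-1:ℤ)^((z i : ℕ)) = 1 := by
    intro i _
    rw [← pow_add]
    exact Even.neg_one_pow ⟨_, rfl⟩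
  have hfilter2 : Finset.univ.filter (fun S : Finset (Fin n) => S.card = 2)
      = Finset.powersetCard 2 (Finset.univ : Finset (Fin n)) := by
    rw [Finset.powersetCard_eq_filter, Finset.powerset_univ]
  have hfilter3 : Finset.univ.filter (fun S : Finset (Fin n) => S.card = 3)
      = Finset.powersetCard 3 (Finset.univ : Finset (Fin n)) := by
    rw [Finset.powersetCard_eq_filter, Finset.powerset_univ]
  have hterm : ∀ j : Fin n, (-1:ℤ)^((z j : ℕ)) = 1 - 2 * ((z j : ℕ) : ℤ) := by
    intro j
    have hlt : (z j : ℕ) < 2 := (z j).isLt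
    interval_cases h : (z j : ℕ) <;> norm_num
  have hS1 : ∑ j : Fin n, (-1:ℤ)^((z j : ℕ))
      = (n:ℤ) - 2*((∑ j : Fin n, (z j : ℕ) : ℕ):ℤ) := by
    rw [Finset.sum_congr rfl (fun j _ => hterm j), Finset.sum_sub_distrib,
      Finset.sum_const, Finset.card_univ, Fintype.card_fin, ← Finset.mul_sum]
    push_cast
    ring
  have h2 := esymm_two (Finset.univ : Finset (Fin n)) (fun j => (-1:ℤ)^((z j : ℕ))) hyy
  have h3 := esymm_three (Finset.univ : Finset (Fin n)) (fun j => (-1:ℤ)^((z j : ℕ))) hyy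
  simp only [Finset.prod_pow_eq_pow_sum, Finset.card_univ, Fintype.card_fin] at h2 h3
  rw [← hfilter2] at h2
  rw [← hfilter3] at h3
  unfold Gint
  rw [← hS1]
  linear_combination (-3*((n:ℤ)-3)) * h2 + h3

lemma Gint_dvd (n : ℕ) (z : Fin n → Fin 2) :
    (32:ℤ) ∣ Gint n z - Gint n (fun _ => 0) := by
  have hz := Gint_formula n z
  have h0 := Gint_formula n (fun _ => 0)
  simp only [Fin.val_zero, Finset.sum_const_zero, pow_zero, Nat.cast_zero,
    mul_zero, sub_zero, mul_one] at h0
  obtain ⟨m, hm⟩ := key_dvd n (∑ j : Fin n, (z j : ℕ))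
  have h3' : 3 * (Gint n z - Gint n (fun _ => 0)) = 32 * m := by
    linear_combination hz - h0 + hm
  omega

theorem stmt13 (n : ℕ) (hn : 4 ≤ n) :
    ∃ ω : ℂ, ‖ω‖ = 1 ∧
      NormedSpace.exp ((-(↑Real.pi * Complex.I / 8)) • Zgad n Finset.univ) =
        ω • ((Finset.univ.noncommProd
                (fun j : Fin n =>
                  PhaseGadget n (((n : ℝ) - 2) * ((n : ℝ) - 3) * Real.pi / 8) {j})
                (fun a _ b _ _ => pgComm n _ _ {a} {b})) *
             ((Finset.univ.filter fun S : Finset (Fin n) => S.card = 2).noncommProd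
                (fun S => PhaseGadget n (-(((n : ℝ) - 3) * Real.pi / 4)) S)
                (fun S _ T _ _ => pgComm n _ _ S T)) *
             ((Finset.univ.filter fun S : Finset (Fin n) => S.card = 3).noncommProd
                (fun S => PhaseGadget n (Real.pi / 4) S)
                (fun S _ T _ _ => pgComm n _ _ S T))) := by
  classical
  refine ⟨Complex.exp (((Real.pi : ℂ) * Complex.I / 16) * ((Gint n (fun _ => 0) : ℤ) : ℂ)),
    ?_, ?_⟩
  · rw [show ((Real.pi : ℂ) * Complex.I / 16) * ((Gint n (fun _ => 0) : ℤ) : ℂ)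
        = ((Real.pi / 16 * ((Gint n (fun _ => 0) : ℤ) : ℝ) : ℝ) : ℂ) * Complex.I by
      push_cast; ring]
    exact Complex.norm_exp_ofReal_mul_I _
  · have e1 := noncommProd_diag Finset.univ _ _
      (fun j _ => pg_diag n (((n : ℝ) - 2) * ((n : ℝ) - 3) * Real.pi / 8) {j})
      (fun a _ b _ _ => pgComm n _ _ {a} {b})
    have e2 := noncommProd_diag (Finset.univ.filter fun S : Finset (Fin n) => S.card = 2) _ _
      (fun S _ => pg_diag n (-(((n : ℝ) - 3) * Real.pi / 4)) S)
      (fun S _ T _ _ => pgComm n _ _ S T)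
    have e3 := noncommProd_diag (Finset.univ.filter fun S : Finset (Fin n) => S.card = 3) _ _
      (fun S _ => pg_diag n (Real.pi / 4) S)
      (fun S _ T _ _ => pgComm n _ _ S T)
    rw [exp_smul_Zgad, e1, e2, e3, Matrix.diagonal_mul_diagonal,
      Matrix.diagonal_mul_diagonal, ← Matrix.diagonal_smul]
    refine congrArg Matrix.diagonal (funext fun z => ?_)
    simp only [Pi.mul_apply, Pi.smul_apply, smul_eq_mul, Finset.sum_singleton]
    rw [← Complex.exp_sum, ← Complex.exp_sum, ← Complex.exp_sum,
      ← Complex.exp_add, ← Complex.exp_add, ← Complex.exp_add]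
    obtain ⟨m, hm⟩ := Gint_dvd n z
    rw [Complex.exp_eq_exp_iff_exists_int]
    refine ⟨m, ?_⟩
    have hc : ((Gint n z : ℤ) : ℂ) - ((Gint n (fun _ => 0) : ℤ) : ℂ) = 32 * (m : ℂ) := by
      exact_mod_cast congrArg (fun t : ℤ => (t : ℂ)) hm
    simp only [Gint] at hc ⊢
    push_cast at hc ⊢
    simp only [← Finset.mul_sum]
    linear_combination ((Real.pi : ℂ) * Complex.I / 16) * hc
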